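/- arXiv:1312.7871 — 5 statements merged into one kernel-verified Lean document; each statement's English description precedes it below -/
import Mathlib

section
/- If φ: C → C is a gauge-reversing map that is differentiable at a point x ∈ C with derivative equal to −Id, then φ(x) = x. -/
/-!
Along the ray through `x`, gauge reversal forces anti-homogeneity: the gauges of `φ (c • x)`
and `φ x` against each other are `c` and `c⁻¹`, and two points of a proper cone with mutually
inverse gauges lie on one ray, so `φ (c • x) = c⁻¹ • φ x`. Differentiating at `c = 1` gives the
Euler identity `D_xφ x = -φ x`, which for `D_xφ = -Id` reads `x = φ x`.
-/

open Set Filter Topology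

/-- The gauge of a cone: `M_C(x,y) = inf {λ > 0 | λ • y - x ∈ closure C}`. -/
noncomputable def coneGauge {V : Type*} [NormedAddCommGroup V] [NormedSpace ℝ V]
    (C : Set V) (x y : V) : ℝ :=
  sInf {l : ℝ | 0 < l ∧ l • y - x ∈ closure C}

/-- A proper open convex cone. -/
def IsProperCone {V : Type*} [NormedAddCommGroup V] [NormedSpace ℝ V] (C : Set V) : Prop :=
  C.Nonempty ∧ IsOpen C ∧ Convex ℝ C ∧ (∀ x ∈ C, ∀ l : ℝ, 0 < l → l • x ∈ C) ∧
    closure C ∩ (-(closure C)) ⊆ {0}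

theorem HasFDerivAt.apply_self_eq_neg_of_map_smul_inv {E F : Type*} [NormedAddCommGroup E]
    [NormedSpace ℝ E] [NormedAddCommGroup F] [NormedSpace ℝ F] {f : E → F} {f' : E →L[ℝ] F}
    {x : E} (hf : HasFDerivAt f f' x) (hhom : ∀ᶠ t in 𝓝 (1 : ℝ), f (t • x) = t⁻¹ • f x) :
    f' x = -f x := by
  have hray : HasDerivAt (fun t : ℝ => f (t • x)) (f' x) 1 := by
    have hline : HasDerivAt (fun t : ℝ => t • x) x 1 := by
      simpa using (hasDerivAt_id (1 : ℝ)).smul_const x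
    rw [← one_smul ℝ x] at hf
    exact hf.comp_hasDerivAt (1 : ℝ) hline
  have hinv : HasDerivAt (fun t : ℝ => t⁻¹ • f x) (-f x) 1 := by
    simpa using (hasDerivAt_inv (one_ne_zero (α := ℝ))).smul_const (f x)
  exact hray.unique (hinv.congr_of_eventuallyEq hhom)

namespace IsProperCone

variable {V : Type*} [NormedAddCommGroup V] [NormedSpace ℝ V] {C : Set V}

theorem smul_mem (hC : IsProperCone C) {x : V} (hx : x ∈ C) {c : ℝ} (hc : 0 < c) :
    c • x ∈ C :=
  hC.2.2.2.1 x hx c hc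

theorem eq_zero_of_mem_closure_of_neg_mem_closure (hC : IsProperCone C) {v : V}
    (hv : v ∈ closure C) (hnv : -v ∈ closure C) : v = 0 :=
  hC.2.2.2.2 ⟨hv, hnv⟩

theorem smul_mem_closure (hC : IsProperCone C) {v : V} (hv : v ∈ closure C) {c : ℝ}
    (hc : 0 < c) : c • v ∈ closure C :=
  map_mem_closure (continuous_const_smul c) hv fun _ hu => hC.smul_mem hu hc

theorem zero_mem_closure (hC : IsProperCone C) : (0 : V) ∈ closure C := by
  obtain ⟨x, hx⟩ := hC.1
  have hlim : Tendsto (fun ε : ℝ => ε • x) (𝓝[>] 0) (𝓝 0) := by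
    have hcont : Continuous fun ε : ℝ => ε • x := by fun_prop
    simpa using (hcont.tendsto 0).mono_left nhdsWithin_le_nhds
  exact mem_closure_of_tendsto hlim
    (eventually_nhdsWithin_of_forall fun _ hε => hC.smul_mem hx hε)

theorem ne_zero_of_mem [Nontrivial V] (hC : IsProperCone C) {x : V} (hx : x ∈ C) : x ≠ 0 := by
  rintro rfl
  have hnhds : C ∩ -C ∈ 𝓝 (0 : V) :=
    inter_mem (hC.2.1.mem_nhds hx) (hC.2.1.neg.mem_nhds (by simpa using hx))
  obtain ⟨v, ⟨hv, hnv⟩, hv0⟩ :=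
    Filter.nonempty_of_mem (inter_mem (mem_nhdsWithin_of_mem_nhds hnhds)
      (self_mem_nhdsWithin (s := {0}ᶜ)))
  exact hv0 (hC.eq_zero_of_mem_closure_of_neg_mem_closure (subset_closure hv) (subset_closure hnv))

theorem smul_mem_closure_iff [Nontrivial V] (hC : IsProperCone C) {x : V} (hx : x ∈ C)
    {s : ℝ} : s • x ∈ closure C ↔ 0 ≤ s := by
  refine ⟨fun hs => not_lt.mp fun hneg => ?_, fun hs => ?_⟩
  · have hnx : -(s • x) ∈ closure C := by
      rw [← neg_smul]
      exact subset_closure (hC.smul_mem hx (neg_pos.mpr hneg))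
    rcases smul_eq_zero.mp (hC.eq_zero_of_mem_closure_of_neg_mem_closure hs hnx) with h | h
    · exact hneg.ne h
    · exact hC.ne_zero_of_mem hx h
  · rcases hs.eq_or_lt with rfl | hpos
    · simpa using hC.zero_mem_closure
    · exact subset_closure (hC.smul_mem hx hpos)

theorem coneGauge_smul_smul [Nontrivial V] (hC : IsProperCone C) {x : V} (hx : x ∈ C)
    {a b : ℝ} (ha : 0 < a) (hb : 0 < b) : coneGauge C (a • x) (b • x) = a / b := by
  have hset : {l : ℝ | 0 < l ∧ l • b • x - a • x ∈ closure C} = Ici (a / b) := by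
    ext l
    rw [mem_ofPred_eq, smul_smul, ← sub_smul, hC.smul_mem_closure_iff hx, sub_nonneg,
      mem_Ici, div_le_iff₀ hb]
    exact ⟨And.right, fun hl => ⟨pos_of_mul_pos_left (ha.trans_le hl) hb.le, hl⟩⟩
  rw [coneGauge, hset, csInf_Ici]

theorem coneGauge_smul_sub_mem_closure (hC : IsProperCone C) {w : V} (hw : w ∈ C) (z : V) :
    coneGauge C z w • w - z ∈ closure C := by
  set S := {l : ℝ | 0 < l ∧ l • w - z ∈ closure C}
  have hS : S.Nonempty := by
    have hlim : Tendsto (fun l : ℝ => w - l⁻¹ • z) atTop (𝓝 w) := by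
      simpa using tendsto_const_nhds.sub ((tendsto_inv_atTop_zero (𝕜 := ℝ)).smul_const z)
    obtain ⟨l, hlC, hl⟩ :=
      ((hlim.eventually (hC.2.1.mem_nhds hw)).and (eventually_gt_atTop 0)).exists
    refine ⟨l, hl, subset_closure ?_⟩
    simpa [smul_sub, smul_inv_smul₀ hl.ne'] using hC.smul_mem hlC hl
  have hinf : coneGauge C z w ∈ closure S := csInf_mem_closure hS ⟨0, fun _ hl => hl.1.le⟩
  have hcont : Continuous fun l : ℝ => l • w - z := by fun_prop
  simpa using map_mem_closure hcont hinf fun _ hl => hl.2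

theorem eq_inv_smul_of_coneGauge_eq (hC : IsProperCone C) {y z : V} (hy : y ∈ C) (hz : z ∈ C)
    {c : ℝ} (hc : 0 < c) (hyz : coneGauge C y z = c) (hzy : coneGauge C z y = c⁻¹) :
    z = c⁻¹ • y := by
  have hpos : c • z - y ∈ closure C := hyz ▸ hC.coneGauge_smul_sub_mem_closure hz y
  have hneg : -(c • z - y) ∈ closure C := by
    convert hC.smul_mem_closure (hzy ▸ hC.coneGauge_smul_sub_mem_closure hy z) hc using 1
    rw [smul_sub, smul_inv_smul₀ hc.ne']
    abel
  rw [← sub_eq_zero.mp (hC.eq_zero_of_mem_closure_of_neg_mem_closure hpos hneg),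
    inv_smul_smul₀ hc.ne']

theorem map_smul_of_gauge_reversing (hC : IsProperCone C) {φ : V → V} (hmaps : MapsTo φ C C)
    (hrev : ∀ x ∈ C, ∀ y ∈ C, coneGauge C (φ x) (φ y) = coneGauge C y x) {x : V} (hx : x ∈ C)
    {c : ℝ} (hc : 0 < c) : φ (c • x) = c⁻¹ • φ x := by
  rcases subsingleton_or_nontrivial V with _ | _
  · exact Subsingleton.elim _ _
  have hcx := hC.smul_mem hx hc
  refine hC.eq_inv_smul_of_coneGauge_eq (hmaps hx) (hmaps hcx) hc ?_ ?_
  · simpa [hrev x hx _ hcx] using hC.coneGauge_smul_smul hx hc one_pos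
  · simpa [hrev _ hcx x hx] using hC.coneGauge_smul_smul hx one_pos hc

end IsProperCone

theorem gauge_reversing_deriv_neg_id_fixed_point_general {V : Type*} [NormedAddCommGroup V]
    [NormedSpace ℝ V] (C : Set V) (hC : IsProperCone C)
    (φ : V → V) (hmaps : Set.MapsTo φ C C)
    (hrev : ∀ x ∈ C, ∀ y ∈ C, coneGauge C (φ x) (φ y) = coneGauge C y x)
    (x : V) (hx : x ∈ C)
    (hderiv : HasFDerivAt φ (-(ContinuousLinearMap.id ℝ V)) x) :
    φ x = x := by
  have hhom : ∀ᶠ t in 𝓝 (1 : ℝ), φ (t • x) = t⁻¹ • φ x :=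
    (eventually_gt_nhds one_pos).mono fun _ ht => hC.map_smul_of_gauge_reversing hmaps hrev hx ht
  simpa using (hderiv.apply_self_eq_neg_of_map_smul_inv hhom).symm

/-- A gauge-reversing map that is differentiable at a point `x` with derivative `-Id`
fixes `x`. -/
theorem gauge_reversing_deriv_neg_id_fixed_point {V : Type*} [NormedAddCommGroup V]
    [NormedSpace ℝ V] [FiniteDimensional ℝ V] (C : Set V) (hC : IsProperCone C)
    (φ : V → V) (hmaps : Set.MapsTo φ C C)
    (hrev : ∀ x ∈ C, ∀ y ∈ C, coneGauge C (φ x) (φ y) = coneGauge C y x)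
    (x : V) (hx : x ∈ C)
    (hderiv : HasFDerivAt φ (-(ContinuousLinearMap.id ℝ V)) x) :
    φ x = x :=
  gauge_reversing_deriv_neg_id_fixed_point_general C hC φ hmaps hrev x hx hderiv
end

section
/- Let (X,d) be a proper geodesic metric space such that for every pair of points x, y there is a geodesic ray starting at x, passing through y, and converging to a Busemann point. Then d(x,y) = sup_ξ (ξ(x) − ξ(y)), where the supremum is over all Busemann points ξ. -/
open Set Filter Topology

/-- A metric space is geodesic if any two points are joined by a geodesic segment. -/
def GeodesicSpace (X : Type*) [MetricSpace X] : Prop :=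
  ∀ x y : X, ∃ γ : ℝ → X, γ 0 = x ∧ γ (dist x y) = y ∧
    ∀ s ∈ Set.Icc (0:ℝ) (dist x y), ∀ t ∈ Set.Icc (0:ℝ) (dist x y),
      dist (γ s) (γ t) = |s - t|

/-- `ξ` is a horofunction of `X` with base-point `b`. -/
def IsHorofunction {X : Type*} [MetricSpace X] (b : X) (ξ : X → ℝ) : Prop :=
  ∃ z : ℕ → X, Tendsto (fun n => dist b (z n)) atTop atTop ∧
    ∀ x : X, Tendsto (fun n => dist x (z n) - dist b (z n)) atTop (𝓝 (ξ x))

/-- `γ : T → X` is an almost-geodesic: `T ⊆ ℝ₊` is unbounded, contains `0`, and for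
every `ε > 0` eventually `|d(γ(0),γ(s)) + d(γ(s),γ(t)) - t| < ε` for `s ≤ t` in `T`. -/
def IsAlmostGeodesic {X : Type*} [MetricSpace X] (T : Set ℝ) (γ : ℝ → X) : Prop :=
  0 ∈ T ∧ T ⊆ Set.Ici (0:ℝ) ∧ ¬ BddAbove T ∧
  ∀ ε > (0:ℝ), ∃ N : ℝ, ∀ s ∈ T, ∀ t ∈ T, N ≤ s → s ≤ t →
    |dist (γ 0) (γ s) + dist (γ s) (γ t) - t| < ε

/-- `ξ` is a Busemann point: a horofunction which is the limit of an almost-geodesic. -/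
def IsBusemann {X : Type*} [MetricSpace X] (b : X) (ξ : X → ℝ) : Prop :=
  IsHorofunction b ξ ∧ ∃ T : Set ℝ, ∃ γ : ℝ → X, IsAlmostGeodesic T γ ∧
    ∀ x : X, Tendsto (fun t => dist x (γ t) - dist b (γ t)) (atTop ⊓ 𝓟 T) (𝓝 (ξ x))

/-- If every pair of points lies on a geodesic ray converging to a Busemann point, then
the metric is recovered from the Busemann points: `d(x,y) = sup_ξ (ξ(x) - ξ(y))`. -/
theorem dist_eq_sup_busemann {X : Type*} [MetricSpace X] [ProperSpace X]
    (hgeo : GeodesicSpace X) (b : X)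
    (hray : ∀ x y : X, ∃ γ : ℝ → X, γ 0 = x ∧ γ (dist x y) = y ∧
      (∀ s ∈ Set.Ici (0:ℝ), ∀ t ∈ Set.Ici (0:ℝ), dist (γ s) (γ t) = |s - t|) ∧
      ∃ ξ : X → ℝ, IsBusemann b ξ ∧
        ∀ z : X, Tendsto (fun t => dist z (γ t) - dist b (γ t)) atTop (𝓝 (ξ z))) :
    ∀ x y : X, dist x y = sSup {r : ℝ | ∃ ξ : X → ℝ, IsBusemann b ξ ∧ r = ξ x - ξ y} := by
  intro x y
  obtain ⟨γ, h0, hdxy, hiso, ξ0, hB0, hlim⟩ := hray x y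
  have hmem : dist x y ∈ {r : ℝ | ∃ ξ : X → ℝ, IsBusemann b ξ ∧ r = ξ x - ξ y} := by
    refine ⟨ξ0, hB0, ?_⟩
    have hdiff : Tendsto (fun t => (dist x (γ t) - dist b (γ t)) -
        (dist y (γ t) - dist b (γ t))) atTop (𝓝 (ξ0 x - ξ0 y)) := (hlim x).sub (hlim y)
    have heq : ∀ᶠ t in atTop, (dist x (γ t) - dist b (γ t)) -
        (dist y (γ t) - dist b (γ t)) = dist x y := by
      filter_upwards [eventually_ge_atTop (dist x y)] with t ht
      have ht0 : (0:ℝ) ≤ t := le_trans dist_nonneg ht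
      have h1 : dist x (γ t) = t := by
        have := hiso 0 Set.self_mem_Ici t ht0
        rw [h0] at this
        rw [this]
        rw [abs_of_nonpos (by linarith)]; ring
      have h2 : dist y (γ t) = t - dist x y := by
        have := hiso (dist x y) dist_nonneg t ht0
        rw [hdxy] at this
        rw [this, abs_of_nonpos (by linarith)]; ring
      rw [h1, h2]; ring
    have h2 : Tendsto (fun _ : ℝ => dist x y) atTop (𝓝 (ξ0 x - ξ0 y)) :=
      hdiff.congr' heq
    exact (tendsto_nhds_unique h2 tendsto_const_nhds).symm
  refine le_antisymm (le_csSup ?_ hmem) (csSup_le ⟨_, hmem⟩ ?_)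
  · refine ⟨dist x y, ?_⟩
    rintro r ⟨ξ, ⟨⟨z, hz, hzlim⟩, -⟩, rfl⟩
    have h1 : Tendsto (fun n => (dist x (z n) - dist b (z n)) -
        (dist y (z n) - dist b (z n))) atTop (𝓝 (ξ x - ξ y)) := (hzlim x).sub (hzlim y)
    refine le_of_tendsto h1 (Eventually.of_forall fun n => ?_)
    have := dist_triangle x y (z n)
    linarith
  · rintro r ⟨ξ, ⟨⟨z, hz, hzlim⟩, -⟩, rfl⟩
    have h1 : Tendsto (fun n => (dist x (z n) - dist b (z n)) -
        (dist y (z n) - dist b (z n))) atTop (𝓝 (ξ x - ξ y)) := (hzlim x).sub (hzlim y)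
    refine le_of_tendsto h1 (Eventually.of_forall fun n => ?_)
    have := dist_triangle x y (z n)
    linarith
end

section
/- Let f₁, f₂, g₁, g₂ be real-valued functions on a cone C satisfying f₁(λx) = −log λ + f₁(x), f₂(λx) = log λ + f₂(x), g₁(λx) = −log λ + g₁(x), g₂(λx) = log λ + g₂(x) for all λ > 0 and x ∈ C. If max(f₁, f₂) = max(g₁, g₂) pointwise on C, then f₁ = g₁ and f₂ = g₂. -/
open Set

/-- On a cone, if `f₁, g₁` are log-anti-homogeneous, `f₂, g₂` are log-homogeneous, and
`max(f₁,f₂) = max(g₁,g₂)` pointwise, then `f₁ = g₁` and `f₂ = g₂`. -/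
theorem max_split_unique_on_cone {V : Type*} [AddCommGroup V] [Module ℝ V]
    (C : Set V) (hne : C.Nonempty)
    (hcone : ∀ x ∈ C, ∀ l : ℝ, 0 < l → l • x ∈ C)
    (f₁ f₂ g₁ g₂ : V → ℝ)
    (hf₁ : ∀ x ∈ C, ∀ l : ℝ, 0 < l → f₁ (l • x) = -Real.log l + f₁ x)
    (hf₂ : ∀ x ∈ C, ∀ l : ℝ, 0 < l → f₂ (l • x) = Real.log l + f₂ x)
    (hg₁ : ∀ x ∈ C, ∀ l : ℝ, 0 < l → g₁ (l • x) = -Real.log l + g₁ x)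
    (hg₂ : ∀ x ∈ C, ∀ l : ℝ, 0 < l → g₂ (l • x) = Real.log l + g₂ x)
    (h : ∀ x ∈ C, max (f₁ x) (f₂ x) = max (g₁ x) (g₂ x)) :
    ∀ x ∈ C, f₁ x = g₁ x ∧ f₂ x = g₂ x := by
  intro x hx
  have key : ∀ t : ℝ, max (-t + f₁ x) (t + f₂ x) = max (-t + g₁ x) (t + g₂ x) := by
    intro t
    have hl : (0:ℝ) < Real.exp t := Real.exp_pos t
    have h' := h (Real.exp t • x) (hcone x hx _ hl)
    rw [hf₁ x hx _ hl, hf₂ x hx _ hl, hg₁ x hx _ hl, hg₂ x hx _ hl,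
      Real.log_exp] at h'
    exact h'
  constructor
  · obtain ⟨t, ht⟩ : ∃ t : ℝ, t = min (f₁ x - f₂ x) (g₁ x - g₂ x) / 2 - 1 := ⟨_, rfl⟩
    have h1 : t + f₂ x < -t + f₁ x := by
      have := min_le_left (f₁ x - f₂ x) (g₁ x - g₂ x)
      linarith [ht, this]
    have h2 : t + g₂ x < -t + g₁ x := by
      have := min_le_right (f₁ x - f₂ x) (g₁ x - g₂ x)
      linarith [ht, this]
    have := key t
    rw [max_eq_left h1.le, max_eq_left h2.le] at this
    linarith
  · obtain ⟨t, ht⟩ : ∃ t : ℝ, t = -(min (f₂ x - f₁ x) (g₂ x - g₁ x) / 2 - 1) := ⟨_, rfl⟩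
    have h1 : -t + f₁ x < t + f₂ x := by
      have := min_le_left (f₂ x - f₁ x) (g₂ x - g₁ x)
      linarith [ht, this]
    have h2 : -t + g₁ x < t + g₂ x := by
      have := min_le_right (f₂ x - f₁ x) (g₂ x - g₁ x)
      linarith [ht, this]
    have := key t
    rw [max_eq_right h1.le, max_eq_right h2.le] at this
    linarith
end

section
/- If ξ₁ is a Busemann point of (X₁,d₁) and ξ₂ is a Busemann point of (X₂,d₂), both proper geodesic metric spaces, and c ∈ [−∞,+∞], then the function [ξ₁,ξ₂,c](x₁,x₂) := max(ξ₁(x₁) + min(c,0), ξ₂(x₂) − max(c,0)) is a Busemann point of the ℓ∞-product (X₁ × X₂, max(d₁,d₂)). -/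
open Set Filter Topology

/-- The combination `[ξ₁, ξ₂, c](x₁,x₂) = max(ξ₁(x₁) + c ∧ 0, ξ₂(x₂) - c ∨ 0)`, with the
degenerate term dropped when `c = ±∞`. -/
noncomputable def comboFn {X₁ X₂ : Type*} (ξ₁ : X₁ → ℝ) (ξ₂ : X₂ → ℝ) (c : EReal) :
    X₁ × X₂ → ℝ :=
  if c = ⊤ then fun p => ξ₁ p.1
  else if c = ⊥ then fun p => ξ₂ p.2
  else fun p => max (ξ₁ p.1 + min c.toReal 0) (ξ₂ p.2 - max c.toReal 0)

/-!
In a geodesic space a Busemann point `ξ` is also the limit of a curve `δ` defined on all of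
`[0, ∞)`: pick times `tₙ₊₁ ≥ tₙ + 1` of the almost-geodesic and join the points `γ tₙ` by
constant-speed geodesic segments. The result is asymptotically 1-Lipschitz and `dist x (δ u) - u`
converges to `ξ x` up to a constant; conversely, every such curve is an almost-geodesic converging
to its limit function. In the `ℓ∞`-product, `dist x (δ₁ (u - d₁), δ₂ (u - d₂)) - u` tends to the
larger of the two limits, each lowered by its delay `dᵢ ≥ 0`, and suitable delays give
`[ξ₁, ξ₂, c]` for finite `c`. Running the second factor at half speed instead makes it drop out,
which gives `c = +∞`, and symmetrically `c = -∞`.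
-/

lemma Filter.Tendsto.max_of_tendsto_atBot {α β : Type*} [TopologicalSpace β] [LinearOrder β]
    [OrderTopology β] [NoMinOrder β] {l : Filter α} {f g : α → β} {a : β}
    (hf : Tendsto f l (𝓝 a)) (hg : Tendsto g l atBot) :
    Tendsto (fun x => max (f x) (g x)) l (𝓝 a) := by
  obtain ⟨b, hb⟩ := exists_lt a
  refine hf.congr' ?_
  filter_upwards [hf.eventually (eventually_ge_nhds hb), hg.eventually_le_atBot b] with x hfx hgx
  exact (max_eq_left (hgx.trans hfx)).symm

lemma tendsto_max_add_atTop (a : ℝ) : Tendsto (fun u : ℝ => max (u + a) 0) atTop atTop :=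
  tendsto_atTop_mono (fun _ => le_max_left _ _) (tendsto_atTop_add_const_right _ a tendsto_id)

lemma tendsto_comp_max_add_sub {f : ℝ → ℝ} {L : ℝ} (hf : Tendsto (fun v => f v - v) atTop (𝓝 L))
    (a : ℝ) :
    Tendsto (fun u => f (max (u + a) 0) - u) atTop (𝓝 (L + a)) := by
  refine ((hf.comp (tendsto_max_add_atTop a)).add_const a).congr' ?_
  filter_upwards [eventually_ge_atTop (-a)] with u hu
  rw [Function.comp_apply, max_eq_left (by linarith)]
  ring

lemma tendsto_comp_half_sub {f : ℝ → ℝ} {L : ℝ} (hf : Tendsto (fun v => f v - v) atTop (𝓝 L)) :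
    Tendsto (fun u => f (u / 2) - u) atTop atBot := by
  have hhalf : Tendsto (fun u : ℝ => u / 2) atTop atTop := tendsto_id.atTop_div_const two_pos
  refine ((hf.comp hhalf).add_atBot (tendsto_neg_atTop_atBot.comp hhalf)).congr fun u => ?_
  simp only [Function.comp_apply]
  ring

lemma exists_seq_strictMono_tendsto_of_not_bddAbove {T : Set ℝ} (hT : ¬BddAbove T) {x₀ : ℝ}
    (hx₀ : x₀ ∈ T) :
    ∃ t : ℕ → ℝ, t 0 = x₀ ∧ (∀ n, t n ∈ T) ∧ StrictMono t ∧ Tendsto t atTop atTop := by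
  have hnext : ∀ x : ℝ, ∃ y ∈ T, x + 1 ≤ y := fun x =>
    let ⟨y, hy, hxy⟩ := not_bddAbove_iff.1 hT (x + 1)
    ⟨y, hy, hxy.le⟩
  choose f hfT hf using hnext
  have hstep : ∀ n, f^[n] x₀ + 1 ≤ f^[n + 1] x₀ := fun n => by
    rw [Function.iterate_succ_apply']; exact hf _
  have hgrowth : ∀ n : ℕ, x₀ + n ≤ f^[n] x₀ := fun n => by
    induction n with
    | zero => simp
    | succ n ih => push_cast; linarith [hstep n]
  refine ⟨fun n => f^[n] x₀, rfl, fun n => ?_, strictMono_nat_of_lt_succ fun n => by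
    linarith [hstep n], tendsto_atTop_mono hgrowth
      (tendsto_atTop_add_const_left _ _ tendsto_natCast_atTop_atTop)⟩
  cases n with
  | zero => exact hx₀
  | succ n => show f^[n + 1] x₀ ∈ T; rw [Function.iterate_succ_apply']; exact hfT _

lemma exists_index_mem_Icc {t : ℕ → ℝ} (ht : StrictMono t) (ht₀ : t 0 = 0)
    (htop : Tendsto t atTop atTop) :
    ∃ idx : ℝ → ℕ, Monotone idx ∧ Tendsto idx atTop atTop ∧
      ∀ u, 0 ≤ u → u ∈ Icc (t (idx u)) (t (idx u + 1)) := by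
  have hex : ∀ u, ∃ n, u < t (n + 1) := fun u =>
    (((tendsto_add_atTop_iff_nat 1).2 htop).eventually_gt_atTop u).exists
  refine ⟨fun u => Nat.find (hex u), fun u v huv => Nat.find_mono fun n h => huv.trans_lt h,
    tendsto_atTop.2 fun K => eventually_atTop.2 ⟨t K, fun u hu => ?_⟩, fun u hu => ?_⟩
  · by_contra! hlt
    exact (Nat.find_spec (hex u)).not_ge (hu.trans' (ht.monotone hlt))
  · refine ⟨?_, (Nat.find_spec (hex u)).le⟩
    show t (Nat.find (hex u)) ≤ u
    rcases hn : Nat.find (hex u) with _ | n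
    · rwa [ht₀]
    · exact not_lt.1 (Nat.find_min (hex u) (hn.symm ▸ n.lt_succ_self))

section

variable {X : Type*} [MetricSpace X]

def IsAsymptoticallyNonexpanding (γ : ℝ → X) : Prop :=
  ∀ ε > (0:ℝ), ∃ N : ℝ, ∀ s t, N ≤ s → s ≤ t → dist (γ s) (γ t) ≤ t - s + ε

def IsAsymptoticRay (γ : ℝ → X) (ξ : X → ℝ) : Prop :=
  IsAsymptoticallyNonexpanding γ ∧
    ∀ x, Tendsto (fun u => dist x (γ u) - u) atTop (𝓝 (ξ x - ξ (γ 0)))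

lemma IsHorofunction.apply_base {b : X} {ξ : X → ℝ} (h : IsHorofunction b ξ) : ξ b = 0 := by
  obtain ⟨z, -, hz⟩ := h
  exact tendsto_nhds_unique (hz b) (by simp only [sub_self]; exact tendsto_const_nhds)

namespace IsAlmostGeodesic

variable {T : Set ℝ} {γ : ℝ → X}

lemma tendsto_dist_zero_sub (h : IsAlmostGeodesic T γ) :
    Tendsto (fun s => dist (γ 0) (γ s) - s) (atTop ⊓ 𝓟 T) (𝓝 0) := by
  rw [Metric.tendsto_nhds]
  intro ε hε
  obtain ⟨N, hN⟩ := h.2.2.2 ε hε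
  filter_upwards [mem_inf_of_left (Ici_mem_atTop N), mem_inf_of_right (mem_principal_self T)]
    with s hNs hs
  simpa using hN s hs s hs hNs le_rfl

lemma abs_dist_sub_lt (h : IsAlmostGeodesic T γ) {ε : ℝ} (hε : 0 < ε) :
    ∃ N : ℝ, ∀ s ∈ T, ∀ t ∈ T, N ≤ s → s ≤ t → |dist (γ s) (γ t) - (t - s)| < ε := by
  obtain ⟨N, hN⟩ := h.2.2.2 (ε / 2) (half_pos hε)
  refine ⟨N, fun s hs t ht hNs hst => ?_⟩
  have hsum := abs_lt.1 (hN s hs t ht hNs hst)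
  have hs := abs_lt.1 (by simpa using hN s hs s hs hNs le_rfl)
  rw [abs_lt]
  constructor <;> linarith

lemma exists_abs_dist_comp_sub_lt (h : IsAlmostGeodesic T γ) {t : ℕ → ℝ} (htT : ∀ n, t n ∈ T)
    (ht : Monotone t) (htop : Tendsto t atTop atTop) {ε : ℝ} (hε : 0 < ε) :
    ∃ K, ∀ m n, K ≤ m → m ≤ n → |dist (γ (t m)) (γ (t n)) - (t n - t m)| < ε := by
  obtain ⟨N, hN⟩ := h.abs_dist_sub_lt hε
  obtain ⟨K, hK⟩ := eventually_atTop.1 (htop.eventually_ge_atTop N)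
  exact ⟨K, fun m n hm hmn => hN _ (htT m) _ (htT n) (hK m hm) (ht hmn)⟩

end IsAlmostGeodesic

namespace IsAsymptoticallyNonexpanding

variable {γ : ℝ → X}

lemma comp (hγ : IsAsymptoticallyNonexpanding γ) {φ : ℝ → ℝ} (hφ : Monotone φ)
    (hφ₁ : LipschitzWith 1 φ) (hφtop : Tendsto φ atTop atTop) :
    IsAsymptoticallyNonexpanding (fun u => γ (φ u)) := by
  intro ε hε
  obtain ⟨N, hN⟩ := hγ ε hε
  obtain ⟨M, hM⟩ := eventually_atTop.1 (hφtop.eventually_ge_atTop N)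
  refine ⟨M, fun s t hs hst => (hN _ _ (hM s hs) (hφ hst)).trans ?_⟩
  have := (le_abs_self _).trans (hφ₁.dist_le_mul t s)
  rw [NNReal.coe_one, one_mul, Real.dist_eq, abs_of_nonneg (sub_nonneg.2 hst)] at this
  linarith

lemma prodMk {Y : Type*} [MetricSpace Y] (hγ : IsAsymptoticallyNonexpanding γ) {δ : ℝ → Y}
    (hδ : IsAsymptoticallyNonexpanding δ) : IsAsymptoticallyNonexpanding (fun u => (γ u, δ u)) := by
  intro ε hε
  obtain ⟨N₁, hN₁⟩ := hγ ε hε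
  obtain ⟨N₂, hN₂⟩ := hδ ε hε
  refine ⟨max N₁ N₂, fun s t hs hst => ?_⟩
  rw [Prod.dist_eq]
  exact max_le (hN₁ s t (le_of_max_le_left hs) hst) (hN₂ s t (le_of_max_le_right hs) hst)

lemma isAlmostGeodesic (hγ : IsAsymptoticallyNonexpanding γ)
    (h₀ : Tendsto (fun s => dist (γ 0) (γ s) - s) atTop (𝓝 0)) : IsAlmostGeodesic (Ici 0) γ := by
  refine ⟨self_mem_Ici, subset_rfl, not_bddAbove_Ici _, fun ε hε => ?_⟩
  obtain ⟨N₁, hN₁⟩ := hγ (ε / 2) (half_pos hε)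
  obtain ⟨N₂, hN₂⟩ := eventually_atTop.1 (Metric.tendsto_nhds.1 h₀ (ε / 2) (half_pos hε))
  refine ⟨max N₁ N₂, fun s _ t _ hs hst => ?_⟩
  have hγst := hN₁ s t (le_of_max_le_left hs) hst
  have hγs := abs_lt.1 (by simpa [Real.dist_eq] using hN₂ s (le_of_max_le_right hs))
  have hγt := abs_lt.1 (by simpa [Real.dist_eq] using hN₂ t ((le_of_max_le_right hs).trans hst))
  have := dist_triangle (γ 0) (γ s) (γ t)
  rw [abs_lt]
  constructor <;> linarith

lemma comp_max_add (hγ : IsAsymptoticallyNonexpanding γ) (a : ℝ) :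
    IsAsymptoticallyNonexpanding (fun u => γ (max (u + a) 0)) :=
  hγ.comp (fun _ _ h => max_le_max (by linarith) le_rfl)
    ((isometry_add_right a).lipschitz.max_const 0) (tendsto_max_add_atTop a)

lemma comp_half (hγ : IsAsymptoticallyNonexpanding γ) :
    IsAsymptoticallyNonexpanding (fun u => γ (u / 2)) :=
  hγ.comp (fun _ _ h => by linarith)
    (LipschitzWith.of_dist_le_mul fun s t => by
      rw [Real.dist_eq, Real.dist_eq, ← sub_div, abs_div, abs_two, NNReal.coe_one, one_mul]
      linarith [abs_nonneg (s - t)])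
    (tendsto_id.atTop_div_const two_pos)

end IsAsymptoticallyNonexpanding

lemma IsAsymptoticRay.isBusemann {γ : ℝ → X} {ξ : X → ℝ} (h : IsAsymptoticRay γ ξ) {b : X}
    (hb : ξ b = 0) : IsBusemann b ξ := by
  have hconv : ∀ x, Tendsto (fun u => dist x (γ u) - dist b (γ u)) atTop (𝓝 (ξ x)) := fun x => by
    simpa [hb] using (h.2 x).sub (h.2 b)
  have hbdd : Tendsto (fun n : ℕ => dist b (γ n)) atTop atTop := by
    simpa using ((h.2 b).comp tendsto_natCast_atTop_atTop).add_atTop tendsto_natCast_atTop_atTop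
  exact ⟨⟨fun n => γ n, hbdd, fun x => (hconv x).comp tendsto_natCast_atTop_atTop⟩, Ici 0, γ,
    h.1.isAlmostGeodesic (by simpa using h.2 (γ 0)), fun x => (hconv x).mono_left inf_le_left⟩

lemma GeodesicSpace.exists_segment (hX : GeodesicSpace X) (x y : X) {a b : ℝ} (hab : a < b) :
    ∃ g : ℝ → X, g a = x ∧ g b = y ∧ ∀ u ∈ Icc a b, ∀ v ∈ Icc a b,
      |dist (g u) (g v) - dist u v| ≤ |dist x y - (b - a)| := by
  obtain ⟨γ, hγ₀, hγ₁, hγ⟩ := hX x y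
  have hba : 0 < b - a := sub_pos.2 hab
  set r := dist x y / (b - a) with hr
  have hr₀ : 0 ≤ r := div_nonneg dist_nonneg hba.le
  have hmem : ∀ u ∈ Icc a b, (u - a) * r ∈ Icc 0 (dist x y) := fun u hu => by
    refine ⟨mul_nonneg (sub_nonneg.2 hu.1) hr₀, ?_⟩
    calc (u - a) * r ≤ (b - a) * r := by gcongr; exact hu.2
      _ = dist x y := by rw [hr]; field_simp
  refine ⟨fun u => γ ((u - a) * r), by simpa using hγ₀, ?_, fun u hu v hv => ?_⟩
  · simp only [hr]; rwa [mul_div_cancel₀ _ hba.ne']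
  · rw [hγ _ (hmem u hu) _ (hmem v hv), Real.dist_eq, ← sub_mul, abs_mul, abs_of_nonneg hr₀,
      sub_sub_sub_cancel_right, ← mul_sub_one, abs_mul, abs_abs]
    calc |u - v| * |r - 1| ≤ (b - a) * |r - 1| := by
          gcongr; exact abs_sub_le_of_le_of_le hu.1 hu.2 hv.1 hv.2
      _ = |(b - a) * (r - 1)| := by rw [abs_mul, abs_of_pos hba]
      _ = |dist x y - (b - a)| := by rw [hr, mul_sub_one, mul_div_cancel₀ _ hba.ne']

def stepDefect (t : ℕ → ℝ) (p : ℕ → X) (n : ℕ) : ℝ :=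
  |dist (p n) (p (n + 1)) - (t (n + 1) - t n)|

lemma tendsto_stepDefect {t : ℕ → ℝ} {p : ℕ → X}
    (hp : ∀ ε > 0, ∃ K, ∀ m n, K ≤ m → m ≤ n → |dist (p m) (p n) - (t n - t m)| < ε) :
    Tendsto (stepDefect t p) atTop (𝓝 0) := by
  rw [Metric.tendsto_atTop]
  intro ε hε
  obtain ⟨K, hK⟩ := hp ε hε
  exact ⟨K, fun n hn => by simpa [stepDefect] using hK n (n + 1) hn n.le_succ⟩

/-- The curve `fun u => g (idx u) u` passes through `p n` at time `t n` and follows `g n` on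
`[t n, t (n + 1)]`. -/
structure IsSegmentInterpolation (t : ℕ → ℝ) (p : ℕ → X) (g : ℕ → ℝ → X) (idx : ℝ → ℕ) :
    Prop where
  apply_left : ∀ n, g n (t n) = p n
  apply_right : ∀ n, g n (t (n + 1)) = p (n + 1)
  abs_dist_sub_le : ∀ n, ∀ u ∈ Icc (t n) (t (n + 1)), ∀ v ∈ Icc (t n) (t (n + 1)),
    |dist (g n u) (g n v) - dist u v| ≤ stepDefect t p n
  monotone_idx : Monotone idx
  tendsto_idx : Tendsto idx atTop atTop
  mem_Icc : ∀ u, 0 ≤ u → u ∈ Icc (t (idx u)) (t (idx u + 1))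

lemma GeodesicSpace.exists_isSegmentInterpolation (hX : GeodesicSpace X) {t : ℕ → ℝ}
    (ht : StrictMono t) (ht₀ : t 0 = 0) (htop : Tendsto t atTop atTop) (p : ℕ → X) :
    ∃ g idx, IsSegmentInterpolation t p g idx := by
  choose g hgl hgr hg using fun n => hX.exists_segment (p n) (p (n + 1)) (ht n.lt_succ_self)
  obtain ⟨idx, hmono, htend, hmem⟩ := exists_index_mem_Icc ht ht₀ htop
  exact ⟨g, idx, hgl, hgr, hg, hmono, htend, hmem⟩

namespace IsSegmentInterpolation

variable {t : ℕ → ℝ} {p : ℕ → X} {g : ℕ → ℝ → X} {idx : ℝ → ℕ}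

lemma dist_left_le (hI : IsSegmentInterpolation t p g idx) {u : ℝ} (hu : 0 ≤ u) :
    dist (p (idx u)) (g (idx u) u) ≤ u - t (idx u) + stepDefect t p (idx u) := by
  obtain ⟨h₁, h₂⟩ := hI.mem_Icc u hu
  have := hI.abs_dist_sub_le _ _ ⟨le_rfl, h₁.trans h₂⟩ _ ⟨h₁, h₂⟩
  rw [hI.apply_left, Real.dist_eq, abs_sub_comm (t _), abs_of_nonneg (sub_nonneg.2 h₁)] at this
  linarith [le_abs_self (dist (p (idx u)) (g (idx u) u) - (u - t (idx u)))]

lemma dist_right_le (hI : IsSegmentInterpolation t p g idx) {u : ℝ} (hu : 0 ≤ u) :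
    dist (g (idx u) u) (p (idx u + 1)) ≤ t (idx u + 1) - u + stepDefect t p (idx u) := by
  obtain ⟨h₁, h₂⟩ := hI.mem_Icc u hu
  have := hI.abs_dist_sub_le _ _ ⟨h₁, h₂⟩ _ ⟨h₁.trans h₂, le_rfl⟩
  rw [hI.apply_right, Real.dist_eq, abs_sub_comm u, abs_of_nonneg (sub_nonneg.2 h₂)] at this
  linarith [le_abs_self (dist (g (idx u) u) (p (idx u + 1)) - (t (idx u + 1) - u))]

/-- On `[t n, t (n + 1)]`, `dist x (g n u) - u` lies between its values at the two ends, up to the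
step defect. -/
lemma tendsto_dist_sub (hI : IsSegmentInterpolation t p g idx)
    (he : Tendsto (stepDefect t p) atTop (𝓝 0)) {x : X} {L : ℝ}
    (hx : Tendsto (fun n => dist x (p n) - t n) atTop (𝓝 L)) :
    Tendsto (fun u => dist x (g (idx u) u) - u) atTop (𝓝 L) := by
  have hup : Tendsto (fun u => dist x (p (idx u)) - t (idx u) + stepDefect t p (idx u)) atTop
      (𝓝 L) := by
    exact add_zero L ▸ (hx.add he).comp hI.tendsto_idx
  have hlow : Tendsto (fun u => dist x (p (idx u + 1)) - t (idx u + 1) - stepDefect t p (idx u))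
      atTop (𝓝 L) := by
    exact sub_zero L ▸ ((hx.comp (tendsto_add_atTop_nat 1)).sub he).comp hI.tendsto_idx
  refine tendsto_of_tendsto_of_tendsto_of_le_of_le' hlow hup ?_ ?_ <;>
    filter_upwards [eventually_ge_atTop 0] with u hu
  · linarith [hI.dist_right_le hu, dist_triangle x (g (idx u) u) (p (idx u + 1))]
  · linarith [hI.dist_left_le hu, dist_triangle x (p (idx u)) (g (idx u) u)]

lemma isAsymptoticallyNonexpanding (hI : IsSegmentInterpolation t p g idx)
    (hp : ∀ ε > 0, ∃ K, ∀ m n, K ≤ m → m ≤ n → |dist (p m) (p n) - (t n - t m)| < ε) :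
    IsAsymptoticallyNonexpanding (fun u => g (idx u) u) := by
  intro ε hε
  obtain ⟨K, hK⟩ := hp (ε / 3) (by positivity)
  have hdef : ∀ n, K ≤ n → stepDefect t p n < ε / 3 := fun n hn => hK n (n + 1) hn n.le_succ
  obtain ⟨N, hN⟩ := eventually_atTop.1 (hI.tendsto_idx.eventually_ge_atTop K)
  refine ⟨max N 0, fun u v hu huv => ?_⟩
  have hu₀ : 0 ≤ u := le_of_max_le_right hu
  have hv₀ : 0 ≤ v := hu₀.trans huv
  have hKu : K ≤ idx u := hN u (le_of_max_le_left hu)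
  rcases (hI.monotone_idx huv).eq_or_lt with hsame | hnext
  · have h := hI.abs_dist_sub_le (idx u) u (hI.mem_Icc u hu₀) v (hsame ▸ hI.mem_Icc v hv₀)
    rw [Real.dist_eq, abs_sub_comm u, abs_of_nonneg (sub_nonneg.2 huv)] at h
    show dist (g (idx u) u) (g (idx v) v) ≤ v - u + ε
    rw [← hsame]
    linarith [le_abs_self (dist (g (idx u) u) (g (idx u) v) - (v - u)), hdef _ hKu]
  · calc dist (g (idx u) u) (g (idx v) v)
        ≤ dist (g (idx u) u) (p (idx u + 1)) + dist (p (idx u + 1)) (p (idx v))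
          + dist (p (idx v)) (g (idx v) v) := dist_triangle4 _ _ _ _
      _ ≤ v - u + ε := by
        linarith [hI.dist_right_le hu₀, hI.dist_left_le hv₀, hdef _ hKu,
          hdef _ (hKu.trans hnext.le), (abs_lt.1 (hK _ _ (hKu.trans (Nat.le_succ _)) hnext)).2]

end IsSegmentInterpolation

theorem IsBusemann.exists_isAsymptoticRay (hX : GeodesicSpace X) {b : X} {ξ : X → ℝ}
    (hξ : IsBusemann b ξ) : ∃ δ : ℝ → X, IsAsymptoticRay δ ξ := by
  obtain ⟨-, T, γ, hγ, hconv⟩ := hξ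
  obtain ⟨t, ht₀, htT, ht, htop⟩ := exists_seq_strictMono_tendsto_of_not_bddAbove hγ.2.2.1 hγ.1
  have htT' : Tendsto t atTop (atTop ⊓ 𝓟 T) :=
    tendsto_inf.2 ⟨htop, tendsto_principal.2 (.of_forall htT)⟩
  have hp := fun ε (hε : 0 < ε) => hγ.exists_abs_dist_comp_sub_lt htT ht.monotone htop hε
  obtain ⟨g, idx, hI⟩ := hX.exists_isSegmentInterpolation ht ht₀ htop (fun n => γ (t n))
  have hidx₀ : idx 0 = 0 :=
    Nat.le_zero.1 (ht.le_iff_le.1 (by simpa [ht₀] using (hI.mem_Icc 0 le_rfl).1))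
  have hδ₀ : g (idx 0) 0 = γ 0 := by simpa [hidx₀, ht₀] using hI.apply_left 0
  refine ⟨fun u => g (idx u) u, hI.isAsymptoticallyNonexpanding hp, fun x => ?_⟩
  simp only [hδ₀]
  refine hI.tendsto_dist_sub (tendsto_stepDefect hp) ?_
  have := (((hconv x).sub (hconv (γ 0))).add hγ.tendsto_dist_zero_sub).comp htT'
  simpa using this.congr fun n => by simp only [Function.comp]; ring

namespace IsAsymptoticRay

variable {X₁ X₂ : Type*} [MetricSpace X₁] [MetricSpace X₂] {δ₁ : ℝ → X₁} {δ₂ : ℝ → X₂}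
  {ξ₁ : X₁ → ℝ} {ξ₂ : X₂ → ℝ}

/-- The second factor runs at half speed, so it drops out of the limit. -/
lemma prod_fst (h₁ : IsAsymptoticRay δ₁ ξ₁) (h₂ : IsAsymptoticRay δ₂ ξ₂) :
    IsAsymptoticRay (fun u => (δ₁ u, δ₂ (u / 2))) (fun x : X₁ × X₂ => ξ₁ x.1) := by
  refine ⟨h₁.1.prodMk h₂.1.comp_half, fun x => ?_⟩
  simp only [Prod.dist_eq, ← max_sub_sub_right]
  exact (h₁.2 x.1).max_of_tendsto_atBot (tendsto_comp_half_sub (h₂.2 x.2))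

lemma prod_snd (h₁ : IsAsymptoticRay δ₁ ξ₁) (h₂ : IsAsymptoticRay δ₂ ξ₂) :
    IsAsymptoticRay (fun u => (δ₁ (u / 2), δ₂ u)) (fun x : X₁ × X₂ => ξ₂ x.2) := by
  refine ⟨h₁.1.comp_half.prodMk h₂.1, fun x => ?_⟩
  simp only [Prod.dist_eq, ← max_sub_sub_right, max_comm (dist x.1 _ - _)]
  exact (h₂.2 x.2).max_of_tendsto_atBot (tendsto_comp_half_sub (h₁.2 x.1))

/-- Delaying each factor by the gap between its term `ξᵢ (δᵢ 0) + offset` and the larger one `M`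
lowers that term in the limit by exactly this gap. -/
lemma exists_prod_max (h₁ : IsAsymptoticRay δ₁ ξ₁) (h₂ : IsAsymptoticRay δ₂ ξ₂) (α β : ℝ) :
    ∃ γ : ℝ → X₁ × X₂, IsAsymptoticRay γ (fun x => max (ξ₁ x.1 + α) (ξ₂ x.2 + β)) := by
  set M := max (ξ₁ (δ₁ 0) + α) (ξ₂ (δ₂ 0) + β)
  have ha₁ : ξ₁ (δ₁ 0) + α - M ≤ 0 := sub_nonpos.2 (le_max_left _ _)
  have ha₂ : ξ₂ (δ₂ 0) + β - M ≤ 0 := sub_nonpos.2 (le_max_right _ _)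
  refine ⟨fun u => (δ₁ (max (u + (ξ₁ (δ₁ 0) + α - M)) 0), δ₂ (max (u + (ξ₂ (δ₂ 0) + β - M)) 0)),
    (h₁.1.comp_max_add _).prodMk (h₂.1.comp_max_add _), fun x => ?_⟩
  simp only [Prod.dist_eq, ← max_sub_sub_right, zero_add, max_eq_right ha₁, max_eq_right ha₂]
  convert (tendsto_comp_max_add_sub (h₁.2 x.1) _).max (tendsto_comp_max_add_sub (h₂.2 x.2) _)
    using 2
  congr 1 <;> ring

end IsAsymptoticRay

end

theorem combo_is_busemann_of_product_general
    {X₁ X₂ : Type*} [MetricSpace X₁] [MetricSpace X₂]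
    (hgeo₁ : GeodesicSpace X₁) (hgeo₂ : GeodesicSpace X₂)
    (b₁ : X₁) (b₂ : X₂) (ξ₁ : X₁ → ℝ) (ξ₂ : X₂ → ℝ)
    (hξ₁ : IsBusemann b₁ ξ₁) (hξ₂ : IsBusemann b₂ ξ₂) (c : EReal) :
    IsBusemann (X := X₁ × X₂) (b₁, b₂) (comboFn ξ₁ ξ₂ c) := by
  obtain ⟨δ₁, hδ₁⟩ := hξ₁.exists_isAsymptoticRay hgeo₁
  obtain ⟨δ₂, hδ₂⟩ := hξ₂.exists_isAsymptoticRay hgeo₂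
  have hb₁ := hξ₁.1.apply_base
  have hb₂ := hξ₂.1.apply_base
  unfold comboFn
  split_ifs
  · exact (hδ₁.prod_fst hδ₂).isBusemann hb₁
  · exact (hδ₁.prod_snd hδ₂).isBusemann hb₂
  · obtain ⟨γ, hγ⟩ := hδ₁.exists_prod_max hδ₂ (min c.toReal 0) (-max c.toReal 0)
    simp only [← sub_eq_add_neg] at hγ
    refine hγ.isBusemann ?_
    rcases le_total c.toReal 0 with hc | hc <;> simp [hb₁, hb₂, hc]

/-- For Busemann points `ξ₁` of `X₁` and `ξ₂` of `X₂` and any `c ∈ [-∞,+∞]`, the function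
`[ξ₁,ξ₂,c]` is a Busemann point of the `ℓ∞`-product `X₁ × X₂` (whose product metric is
`dist (p,q) = max (dist p₁ q₁) (dist p₂ q₂)`). -/
theorem combo_is_busemann_of_product
    {X₁ X₂ : Type*} [MetricSpace X₁] [MetricSpace X₂]
    [ProperSpace X₁] [ProperSpace X₂]
    (hgeo₁ : GeodesicSpace X₁) (hgeo₂ : GeodesicSpace X₂)
    (b₁ : X₁) (b₂ : X₂) (ξ₁ : X₁ → ℝ) (ξ₂ : X₂ → ℝ)
    (hξ₁ : IsBusemann b₁ ξ₁) (hξ₂ : IsBusemann b₂ ξ₂) (c : EReal) :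
    IsBusemann (X := X₁ × X₂) (b₁, b₂) (comboFn ξ₁ ξ₂ c) :=
  combo_is_busemann_of_product_general hgeo₁ hgeo₂ b₁ b₂ ξ₁ ξ₂ hξ₁ hξ₂ c
end

section
/- Every horofunction of the ℓ∞-product of two proper geodesic metric spaces (X₁,d₁) and (X₂,d₂) is of the form [ξ₁,ξ₂,c](x₁,x₂) = max(ξ₁(x₁) + min(c,0), ξ₂(x₂) − max(c,0)) with ξᵢ in the horofunction compactification of Xᵢ and c ∈ [−∞,+∞], where at least one of ξ₁, ξ₂ is a horofunction (and c = −∞ if ξ₁ is not, c = +∞ if ξ₂ is not). -/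
open Set Filter Topology

/-- Extract a pointwise-convergent subsequence from a sequence of 1-Lipschitz functions
vanishing at a base point, on a separable metric space. -/
lemma exists_subseq_tendsto_pointwise {Y : Type*} [MetricSpace Y]
    [TopologicalSpace.SeparableSpace Y] (y₀ : Y) (f : ℕ → Y → ℝ)
    (hlip : ∀ n x y, |f n x - f n y| ≤ dist x y) (hb : ∀ n, f n y₀ = 0) :
    ∃ φ : ℕ → ℕ, StrictMono φ ∧ ∃ g : Y → ℝ,
      ∀ x, Tendsto (fun n => f (φ n) x) atTop (𝓝 (g x)) := by
  have : Nonempty Y := ⟨y₀⟩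
  set u : ℕ → Y := TopologicalSpace.denseSeq Y with hu
  have hdense : DenseRange u := TopologicalSpace.denseRange_denseSeq Y
  set S : Set (ℕ → ℝ) := Set.pi Set.univ (fun k => Icc (-(dist (u k) y₀)) (dist (u k) y₀)) with hS
  have hcomp : IsCompact S := isCompact_univ_pi fun k => isCompact_Icc
  have hmem : ∀ n, (fun k => f n (u k)) ∈ S := by
    intro n k _
    have h := hlip n (u k) y₀
    rw [hb n, sub_zero] at h
    exact abs_le.mp h
  obtain ⟨a, -, φ, hφ, hconv⟩ := hcomp.tendsto_subseq hmem
  have hconvk : ∀ k, Tendsto (fun n => f (φ n) (u k)) atTop (𝓝 (a k)) := by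
    intro k
    exact (tendsto_pi_nhds.mp hconv) k
  have hcauchy : ∀ x : Y, CauchySeq (fun n => f (φ n) x) := by
    intro x
    rw [Metric.cauchySeq_iff]
    intro ε hε
    obtain ⟨k, hk⟩ := hdense.exists_dist_lt x (show (0:ℝ) < ε/4 by linarith)
    have hc : CauchySeq (fun n => f (φ n) (u k)) := (hconvk k).cauchySeq
    rw [Metric.cauchySeq_iff] at hc
    obtain ⟨N, hN⟩ := hc (ε/4) (by linarith)
    refine ⟨N, fun m hm n hn => ?_⟩
    have h1 := hlip (φ m) x (u k)
    have h2 := hlip (φ n) x (u k)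
    have h3 := hN m hm n hn
    rw [Real.dist_eq] at h3 ⊢
    have := abs_sub_abs_le_abs_sub (f (φ m) x - f (φ n) x) 0
    calc |f (φ m) x - f (φ n) x|
        = |(f (φ m) x - f (φ m) (u k)) + (f (φ m) (u k) - f (φ n) (u k))
            + (f (φ n) (u k) - f (φ n) x)| := by ring_nf
      _ ≤ |(f (φ m) x - f (φ m) (u k)) + (f (φ m) (u k) - f (φ n) (u k))|
            + |f (φ n) (u k) - f (φ n) x| := abs_add_le _ _
      _ ≤ |f (φ m) x - f (φ m) (u k)| + |f (φ m) (u k) - f (φ n) (u k)|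
            + |f (φ n) (u k) - f (φ n) x| := by
            have := abs_add_le (f (φ m) x - f (φ m) (u k)) (f (φ m) (u k) - f (φ n) (u k))
            linarith
      _ < ε := by
            have h2' : |f (φ n) (u k) - f (φ n) x| ≤ dist (u k) x := by
              have := hlip (φ n) (u k) x; exact this
            rw [dist_comm (u k) x] at h2'
            linarith
  have hex : ∀ x : Y, ∃ l : ℝ, Tendsto (fun n => f (φ n) x) atTop (𝓝 l) := by
    intro x
    exact cauchySeq_tendsto_of_complete (hcauchy x)
  choose g hg using hex
  exact ⟨φ, hφ, g, hg⟩

/-- Every `EReal`-valued sequence has a convergent subsequence. -/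
lemma exists_subseq_tendsto_ereal (c : ℕ → EReal) :
    ∃ φ : ℕ → ℕ, StrictMono φ ∧ ∃ L : EReal, Tendsto (c ∘ φ) atTop (𝓝 L) := by
  obtain ⟨L, -, φ, hφ, hc⟩ := (isCompact_univ (X := EReal)).tendsto_subseq
    (x := c) (fun n => mem_univ _)
  exact ⟨φ, hφ, L, hc⟩

lemma tendsto_max_of_atBot_right {A B : ℕ → ℝ} {L : ℝ}
    (hA : Tendsto A atTop (𝓝 L)) (hB : Tendsto B atTop atBot) :
    Tendsto (fun n => max (A n) (B n)) atTop (𝓝 L) := by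
  apply hA.congr'
  filter_upwards [hA.eventually (eventually_ge_nhds (show L - 1 < L by linarith)),
    hB.eventually_le_atBot (L - 1)] with n h1 h2
  exact (max_eq_left (h2.trans h1)).symm

lemma key_max_identity (a1 a2 d1 d2 : ℝ) :
    max a1 a2 - max d1 d2
      = max ((a1 - d1) + min (d1 - d2) 0) ((a2 - d2) - max (d1 - d2) 0) := by
  rcases le_total d1 d2 with h | h <;> rcases le_total a1 a2 with h' | h' <;>
    simp [max_def, min_def] <;> split_ifs <;> linarith

lemma d1_decomp (d1 d2 : ℝ) : min (d1 - d2) 0 + max d1 d2 = d1 := by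
  rcases le_total d1 d2 with h | h <;> simp [min_def, max_def] <;> split_ifs <;> linarith

lemma d2_decomp (d1 d2 : ℝ) : -(max (d1 - d2) 0) + max d1 d2 = d2 := by
  rcases le_total d1 d2 with h | h <;> simp [min_def, max_def] <;> split_ifs <;> linarith

def InHorofunctionCompactification {X : Type*} [MetricSpace X] (b : X) (ξ : X → ℝ) : Prop :=
  (∃ z : X, ξ = fun x => dist x z - dist b z) ∨ IsHorofunction b ξ

/-- Every horofunction of the `ℓ∞`-product of two proper geodesic metric spaces has the
form `[ξ₁,ξ₂,c]` with each `ξᵢ` in the horofunction compactification of `Xᵢ`, at least one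
of them a horofunction, and `c = -∞` (resp. `c = +∞`) if `ξ₁` (resp. `ξ₂`) is not. -/
theorem horofunction_of_product_form
    {X₁ X₂ : Type*} [MetricSpace X₁] [MetricSpace X₂]
    [ProperSpace X₁] [ProperSpace X₂]
    (hgeo₁ : GeodesicSpace X₁) (hgeo₂ : GeodesicSpace X₂)
    (b₁ : X₁) (b₂ : X₂) (ξ : X₁ × X₂ → ℝ)
    (hξ : IsHorofunction (X := X₁ × X₂) (b₁, b₂) ξ) :
    ∃ (ξ₁ : X₁ → ℝ) (ξ₂ : X₂ → ℝ) (c : EReal),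
      ξ = comboFn ξ₁ ξ₂ c ∧
      InHorofunctionCompactification b₁ ξ₁ ∧
      InHorofunctionCompactification b₂ ξ₂ ∧
      (IsHorofunction b₁ ξ₁ ∨ IsHorofunction b₂ ξ₂) ∧
      (¬ IsHorofunction b₁ ξ₁ → c = ⊥) ∧
      (¬ IsHorofunction b₂ ξ₂ → c = ⊤) := by
  obtain ⟨z, hzdist, hzconv⟩ := hξ
  set ψ₁ : ℕ → X₁ → ℝ := fun n x => dist x (z n).1 - dist b₁ (z n).1 with hψ₁
  set ψ₂ : ℕ → X₂ → ℝ := fun n x => dist x (z n).2 - dist b₂ (z n).2 with hψ₂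
  set cR : ℕ → ℝ := fun n => dist b₁ (z n).1 - dist b₂ (z n).2 with hcRdef
  have hlip₁ : ∀ n x y, |ψ₁ n x - ψ₁ n y| ≤ dist x y := by
    intro n x y
    have h : ψ₁ n x - ψ₁ n y = dist x (z n).1 - dist y (z n).1 := by
      simp only [hψ₁]; ring
    rw [h]; exact abs_dist_sub_le _ _ _
  have hlip₂ : ∀ n x y, |ψ₂ n x - ψ₂ n y| ≤ dist x y := by
    intro n x y
    have h : ψ₂ n x - ψ₂ n y = dist x (z n).2 - dist y (z n).2 := by
      simp only [hψ₂]; ring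
    rw [h]; exact abs_dist_sub_le _ _ _
  have hb1 : ∀ n, ψ₁ n b₁ = 0 := fun n => sub_self _
  have hb2 : ∀ n, ψ₂ n b₂ = 0 := fun n => sub_self _
  obtain ⟨φ₁, hφ₁, g₁, hg₁⟩ := exists_subseq_tendsto_pointwise b₁ ψ₁ hlip₁ hb1
  obtain ⟨φ₂, hφ₂, g₂, hg₂⟩ := exists_subseq_tendsto_pointwise b₂ (fun n => ψ₂ (φ₁ n))
    (fun n x y => hlip₂ (φ₁ n) x y) (fun n => hb2 (φ₁ n))
  obtain ⟨φ₃, hφ₃, c, hc⟩ := exists_subseq_tendsto_ereal (fun n => ((cR (φ₁ (φ₂ n)) : ℝ) : EReal))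
  set φ : ℕ → ℕ := fun n => φ₁ (φ₂ (φ₃ n)) with hφdef
  have hφmono : StrictMono φ := hφ₁.comp (hφ₂.comp hφ₃)
  have Hg₁ : ∀ x, Tendsto (fun n => ψ₁ (φ n) x) atTop (𝓝 (g₁ x)) :=
    fun x => (hg₁ x).comp ((hφ₂.comp hφ₃).tendsto_atTop)
  have Hg₂ : ∀ x, Tendsto (fun n => ψ₂ (φ n) x) atTop (𝓝 (g₂ x)) :=
    fun x => (hg₂ x).comp hφ₃.tendsto_atTop
  have Hc : Tendsto (fun n => ((cR (φ n) : ℝ) : EReal)) atTop (𝓝 c) := hc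
  have hrφ : Tendsto (fun n => dist (b₁, b₂) (z (φ n))) atTop atTop :=
    hzdist.comp hφmono.tendsto_atTop
  have hdist_eq : ∀ n (x : X₁ × X₂), dist x (z n) - dist (b₁, b₂) (z n)
      = max (ψ₁ n x.1 + min (cR n) 0) (ψ₂ n x.2 - max (cR n) 0) := by
    intro n x
    rw [Prod.dist_eq (x := x), Prod.dist_eq (x := (b₁, b₂))]
    exact key_max_identity _ _ _ _
  have hconvφ : ∀ x : X₁ × X₂, Tendsto
      (fun n => max (ψ₁ (φ n) x.1 + min (cR (φ n)) 0) (ψ₂ (φ n) x.2 - max (cR (φ n)) 0))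
      atTop (𝓝 (ξ x)) := by
    intro x
    exact ((hzconv x).comp hφmono.tendsto_atTop).congr fun n => hdist_eq (φ n) x
  by_cases hcT : c = ⊤
  · -- c = ⊤ : the second factor escapes comparatively; ξ = g₁ ∘ fst
    have hcnTop : Tendsto (fun n => cR (φ n)) atTop atTop := by
      rw [hcT, EReal.tendsto_nhds_top_iff_real] at Hc
      rw [tendsto_atTop]
      intro b
      filter_upwards [Hc b] with n hn
      exact le_of_lt (by exact_mod_cast hn)
    have hd1 : Tendsto (fun n => dist b₁ (z (φ n)).1) atTop atTop := by
      apply tendsto_atTop_mono _ hcnTop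
      intro n
      have : (0:ℝ) ≤ dist b₂ (z (φ n)).2 := dist_nonneg
      simp only [hcRdef]
      linarith
    have hhoro₁ : IsHorofunction b₁ g₁ := ⟨fun n => (z (φ n)).1, hd1, Hg₁⟩
    have hξeq : ∀ x : X₁ × X₂, ξ x = g₁ x.1 := by
      intro x
      have hmin : Tendsto (fun n => min (cR (φ n)) 0) atTop (𝓝 0) := by
        apply tendsto_const_nhds.congr'
        filter_upwards [hcnTop.eventually_ge_atTop 0] with n hn
        exact (min_eq_right hn).symm
      have hA : Tendsto (fun n => ψ₁ (φ n) x.1 + min (cR (φ n)) 0) atTop (𝓝 (g₁ x.1)) := by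
        simpa using (Hg₁ x.1).add hmin
      have hB : Tendsto (fun n => ψ₂ (φ n) x.2 - max (cR (φ n)) 0) atTop atBot := by
        have ht : Tendsto (fun n => dist x.2 b₂ + -(cR (φ n))) atTop atBot :=
          tendsto_atBot_add_const_left atTop _ (tendsto_neg_atTop_atBot.comp hcnTop)
        apply tendsto_atBot_mono _ ht
        intro n
        have h1 : ψ₂ (φ n) x.2 ≤ dist x.2 b₂ := by
          have := abs_dist_sub_le x.2 b₂ (z (φ n)).2
          have := (abs_le.mp this).2
          simpa [hψ₂] using this
        have h2 : cR (φ n) ≤ max (cR (φ n)) 0 := le_max_left _ _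
        linarith
      exact tendsto_nhds_unique (hconvφ x) (tendsto_max_of_atBot_right hA hB)
    refine ⟨g₁, fun x => dist x b₂ - dist b₂ b₂, ⊤, ?_, Or.inr hhoro₁, Or.inl ⟨b₂, rfl⟩,
      Or.inl hhoro₁, fun h => absurd hhoro₁ h, fun _ => rfl⟩
    funext x
    simp only [comboFn, if_pos rfl]
    exact hξeq x
  by_cases hcB : c = ⊥
  · -- c = ⊥ : symmetric; ξ = g₂ ∘ snd
    have hcnBot : Tendsto (fun n => cR (φ n)) atTop atBot := by
      rw [hcB, EReal.tendsto_nhds_bot_iff_real] at Hc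
      rw [tendsto_atBot]
      intro b
      filter_upwards [Hc b] with n hn
      exact le_of_lt (by exact_mod_cast hn)
    have hd2 : Tendsto (fun n => dist b₂ (z (φ n)).2) atTop atTop := by
      apply tendsto_atTop_mono _ (tendsto_neg_atBot_atTop.comp hcnBot)
      intro n
      have : (0:ℝ) ≤ dist b₁ (z (φ n)).1 := dist_nonneg
      simp only [hcRdef, Function.comp]
      linarith
    have hhoro₂ : IsHorofunction b₂ g₂ := ⟨fun n => (z (φ n)).2, hd2, Hg₂⟩
    have hξeq : ∀ x : X₁ × X₂, ξ x = g₂ x.2 := by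
      intro x
      have hmax : Tendsto (fun n => max (cR (φ n)) 0) atTop (𝓝 0) := by
        apply tendsto_const_nhds.congr'
        filter_upwards [hcnBot.eventually_le_atBot 0] with n hn
        exact (max_eq_right hn).symm
      have hB : Tendsto (fun n => ψ₂ (φ n) x.2 - max (cR (φ n)) 0) atTop (𝓝 (g₂ x.2)) := by
        simpa using (Hg₂ x.2).sub hmax
      have hA : Tendsto (fun n => ψ₁ (φ n) x.1 + min (cR (φ n)) 0) atTop atBot := by
        have ht : Tendsto (fun n => dist x.1 b₁ + cR (φ n)) atTop atBot :=
          tendsto_atBot_add_const_left atTop _ hcnBot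
        apply tendsto_atBot_mono _ ht
        intro n
        have h1 : ψ₁ (φ n) x.1 ≤ dist x.1 b₁ := by
          have := abs_dist_sub_le x.1 b₁ (z (φ n)).1
          have := (abs_le.mp this).2
          simpa [hψ₁] using this
        have h2 : min (cR (φ n)) 0 ≤ cR (φ n) := min_le_left _ _
        linarith
      have := tendsto_max_of_atBot_right hB hA
      exact tendsto_nhds_unique (hconvφ x) (this.congr fun n => max_comm _ _)
    refine ⟨fun x => dist x b₁ - dist b₁ b₁, g₂, ⊥, ?_, Or.inl ⟨b₁, rfl⟩, Or.inr hhoro₂,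
      Or.inr hhoro₂, fun _ => rfl, fun h => absurd hhoro₂ h⟩
    funext x
    simp only [comboFn, if_neg (by simp : (⊥ : EReal) ≠ ⊤), if_pos rfl]
    exact hξeq x
  · -- c finite
    set t : ℝ := c.toReal with ht
    have hct : ((t : ℝ) : EReal) = c := EReal.coe_toReal hcT hcB
    have hcnt : Tendsto (fun n => cR (φ n)) atTop (𝓝 t) := by
      rw [← hct] at Hc
      exact EReal.tendsto_coe.mp Hc
    have hmin : Tendsto (fun n => min (cR (φ n)) 0) atTop (𝓝 (min t 0)) :=
      hcnt.min tendsto_const_nhds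
    have hmax : Tendsto (fun n => max (cR (φ n)) 0) atTop (𝓝 (max t 0)) :=
      hcnt.max tendsto_const_nhds
    have hd1 : Tendsto (fun n => dist b₁ (z (φ n)).1) atTop atTop := by
      apply (hmin.add_atTop hrφ).congr
      intro n
      rw [Prod.dist_eq (x := (b₁, b₂))]
      exact d1_decomp _ _
    have hd2 : Tendsto (fun n => dist b₂ (z (φ n)).2) atTop atTop := by
      apply ((hmax.neg).add_atTop hrφ).congr
      intro n
      rw [Prod.dist_eq (x := (b₁, b₂))]
      exact d2_decomp _ _
    have hhoro₁ : IsHorofunction b₁ g₁ := ⟨fun n => (z (φ n)).1, hd1, Hg₁⟩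
    have hhoro₂ : IsHorofunction b₂ g₂ := ⟨fun n => (z (φ n)).2, hd2, Hg₂⟩
    have hξeq : ∀ x : X₁ × X₂, ξ x = max (g₁ x.1 + min t 0) (g₂ x.2 - max t 0) := by
      intro x
      exact tendsto_nhds_unique (hconvφ x) (((Hg₁ x.1).add hmin).max ((Hg₂ x.2).sub hmax))
    refine ⟨g₁, g₂, c, ?_, Or.inr hhoro₁, Or.inr hhoro₂, Or.inl hhoro₁,
      fun h => absurd hhoro₁ h, fun h => absurd hhoro₂ h⟩
    funext x
    simp only [comboFn, if_neg hcT, if_neg hcB]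
    exact hξeq x
end
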